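/- arXiv:2201.03702 — 2 statements merged into one kernel-verified Lean document; each statement's English description precedes it below -/
import Mathlib

section
/- If a hypothesis with entailed set A is consistent, i.e., tn(A) = |E⁻| (equivalently A ∩ E⁻ = ∅), then every specialization A' of A (A' ⊆ A) satisfies S_ACC(A) ≥ S_ACC(A'). (Specializations of a consistent hypothesis are never more accurate.) -/
open Finset

variable {α : Type*}

/-- True positives: examples entailed by the hypothesis that are positive. -/
def tp [DecidableEq α] (Ep A : Finset α) : ℕ := (A ∩ Ep).card

/-- True negatives: negative examples not entailed by the hypothesis. -/
def tn [DecidableEq α] (En A : Finset α) : ℕ := (En \ A).card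

/-- False negatives: positive examples not entailed by the hypothesis. -/
def fnScore [DecidableEq α] (Ep A : Finset α) : ℕ := (Ep \ A).card

/-- False positives: negative examples entailed by the hypothesis. -/
def fpScore [DecidableEq α] (En A : Finset α) : ℕ := (A ∩ En).card

/-- Accuracy score. -/
def sAcc [DecidableEq α] (Ep En A : Finset α) : ℕ := tp Ep A + tn En A

/-- MDL score: accuracy minus hypothesis size, as an integer. -/
def sMdl [DecidableEq α] (Ep En A : Finset α) (s : ℕ) : ℤ := (tp Ep A + tn En A : ℤ) - s

theorem tp_mono [DecidableEq α] (Ep : Finset α) : Monotone (tp Ep) :=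
  fun _ _ h ↦ card_le_card (inter_subset_inter_right h)

theorem tn_le_card [DecidableEq α] (En A : Finset α) : tn En A ≤ En.card :=
  card_le_card sdiff_subset

theorem consistent_specializations_not_better [DecidableEq α] (Ep En A A' : Finset α)
    (hconsistent : tn En A = En.card) (hspec : A' ⊆ A) :
    sAcc Ep En A ≥ sAcc Ep En A' :=
  calc sAcc Ep En A' = tp Ep A' + tn En A' := rfl
    _ ≤ tp Ep A + En.card := add_le_add (tp_mono Ep hspec) (tn_le_card En A')
    _ = sAcc Ep En A := by rw [sAcc, hconsistent]
end

section
/- Let three hypotheses have entailed sets A₁, A₂, A₃ and sizes s₁, s₂, s₃ ∈ ℕ, where A₃ is a generalization of A₁ (A₁ ⊆ A₃). If, as integers, S_MDL(A₂,s₂) − S_MDL(A₁,s₁) > fn(A₁) − (s₃ − s₁), then S_MDL(A₂,s₂) > S_MDL(A₃,s₃). (Sound generalization-pruning constraint under the MDL score.) -/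
/-!
A generalization `A₃ ⊇ A₁` can gain at most the positives that `A₁` misses, `fn(A₁)`, and can
only lose true negatives, so `S_MDL(A₃, s₃) ≤ S_MDL(A₁, s₁) + fn(A₁) − (s₃ − s₁)`.
The hypothesis says exactly that `S_MDL(A₂, s₂)` exceeds this bound.
-/

open Finset

variable {α : Type*}

section Scores

variable [DecidableEq α]

theorem tp_add_fnScore (Ep A : Finset α) : tp Ep A + fnScore Ep A = Ep.card := by
  rw [tp, fnScore, inter_comm]
  exact card_inter_add_card_sdiff Ep A

theorem tp_le_card (Ep A : Finset α) : tp Ep A ≤ Ep.card :=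
  card_le_card inter_subset_right

theorem tn_anti {En A B : Finset α} (hAB : A ⊆ B) : tn En B ≤ tn En A :=
  card_le_card (sdiff_subset_sdiff Subset.rfl hAB)

theorem sMdl_le_of_subset (Ep En : Finset α) {A B : Finset α} (hAB : A ⊆ B) (s t : ℕ) :
    sMdl Ep En B t ≤ sMdl Ep En A s + fnScore Ep A - ((t : ℤ) - s) := by
  have htp : tp Ep B ≤ tp Ep A + fnScore Ep A := tp_add_fnScore Ep A ▸ tp_le_card Ep B
  have htn : tn En B ≤ tn En A := tn_anti hAB
  simp only [sMdl]
  omega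

end Scores

theorem mdl_generalization_pruning [DecidableEq α] (Ep En A1 A2 A3 : Finset α)
    (s1 s2 s3 : ℕ) (hgen : A1 ⊆ A3)
    (h : sMdl Ep En A2 s2 - sMdl Ep En A1 s1 > (fnScore Ep A1 : ℤ) - ((s3 : ℤ) - (s1 : ℤ))) :
    sMdl Ep En A2 s2 > sMdl Ep En A3 s3 := by
  have hbound := sMdl_le_of_subset Ep En hgen s1 s3
  linarith
end
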